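/- Suppose the value group |k^×| is dense in (0,∞). For any Banach function algebra A over k, the gauge norm ‖·‖_{A,A°} associated to the subring A° of power-bounded elements is the unique power-multiplicative norm on A equivalent to ‖·‖_A, and it equals the spectral radius function ρ_A. -/

import Mathlib

open Pointwise Filter Topology

def kball (k : Type*) [NormedField k] (r : ℝ) : Set k := {c | ‖c‖ ≤ r}

noncomputable def specRad {A : Type*} [NormedRing A] (a : A) : ℝ :=
  ⨅ n : ℕ+, ‖a ^ (n : ℕ)‖ ^ (((n : ℕ) : ℝ))⁻¹

def PowBdd {A : Type*} [NormedRing A] (a : A) : Prop := ∃ C : ℝ, ∀ n : ℕ, ‖a ^ n‖ ≤ C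

noncomputable def gaugeNorm (k : Type*) {A : Type*} [NormedField k] [AddCommGroup A]
    [Module k A] (W : Set A) (a : A) : ℝ :=
  sInf {r : ℝ | 0 < r ∧ a ∈ kball k r • W}

/-- `N` is a power-multiplicative norm on the `k`-algebra `A` equivalent to the given
norm of `A`. -/
def IsEquivPowMulNorm (k : Type*) {A : Type*} [NormedField k] [NormedCommRing A]
    [NormedAlgebra k A] (N : A → ℝ) : Prop :=
  (∀ a : A, N a = 0 ↔ a = 0) ∧
  (∀ a b : A, N (a - b) ≤ max (N a) (N b)) ∧
  (∀ (c : k) (a : A), N (c • a) = ‖c‖ * N a) ∧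
  (∀ a b : A, N (a * b) ≤ N a * N b) ∧
  (∀ a : A, N (a * a) = N a * N a) ∧
  (∃ C > 0, ∀ a : A, N a ≤ C * ‖a‖ ∧ ‖a‖ ≤ C * N a)

/-!
In a Banach function algebra `‖a ^ n‖ ≤ C ρ(a) ^ n` for all `n`. Bounding `‖(a b) ^ n‖` and,
through the binomial expansion and the ultrametric inequality, `‖(a + b) ^ n‖` by a constant
times an `n`-th power and taking `n`-th roots shows that `ρ` is a power-multiplicative
ultrametric norm equivalent to `‖·‖`. The same bound identifies `A°` with the unit ball
`{ρ ≤ 1}`; as `ρ (c • a) = ‖c‖ ρ(a)` and `|k^×|` is dense, the gauge of that ball is `ρ`.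
Finally, if `N ≤ K N'` and both are multiplicative on squares then `N ≤ N'`, since
`N(a) ^ 2 ^ m ≤ K N'(a) ^ 2 ^ m` for every `m`; this gives uniqueness.
-/

theorem le_of_frequently_pow_le_mul_pow {t M K : ℝ} (hM : 0 ≤ M)
    (h : ∃ᶠ n in atTop, t ^ n ≤ K * M ^ n) : t ≤ M := by
  by_contra! hlt
  have ht : 0 < t := hM.trans_lt hlt
  have hlim : Tendsto (fun n : ℕ => K * (M / t) ^ n) atTop (𝓝 0) := by
    simpa using (tendsto_pow_atTop_nhds_zero_of_lt_one (div_nonneg hM ht.le)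
      ((div_lt_one ht).2 hlt)).const_mul K
  have hev : ∀ᶠ n in atTop, K * M ^ n < t ^ n :=
    (hlim.eventually (gt_mem_nhds one_pos)).mono fun n hn => by
      rwa [div_pow, ← mul_div_assoc, div_lt_one (pow_pos ht n)] at hn
  obtain ⟨n, hle, hlt⟩ := (h.and_eventually hev).exists
  exact hlt.not_ge hle

theorem map_pow_two_pow_of_map_mul_self {M : Type*} [Monoid M] {f : M → ℝ}
    (hf : ∀ a, f (a * a) = f a * f a) (a : M) (m : ℕ) : f (a ^ 2 ^ m) = f a ^ 2 ^ m := by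
  induction m with
  | zero => simp
  | succ m ih => rw [pow_succ, pow_mul, pow_mul, sq, sq, hf, ih]

theorem le_of_map_mul_self_of_le_mul {M : Type*} [Monoid M] {f g : M → ℝ}
    (hf : ∀ a, f (a * a) = f a * f a) (hg : ∀ a, g (a * a) = g a * g a) (hg0 : ∀ a, 0 ≤ g a)
    {K : ℝ} (h : ∀ a, f a ≤ K * g a) (a : M) : f a ≤ g a := by
  have hsq : ∀ m : ℕ, f a ^ 2 ^ m ≤ K * g a ^ 2 ^ m := fun m => by
    rw [← map_pow_two_pow_of_map_mul_self hf, ← map_pow_two_pow_of_map_mul_self hg]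
    exact h _
  exact le_of_frequently_pow_le_mul_pow (hg0 a) <|
    (tendsto_pow_atTop_atTop_of_one_lt one_lt_two).frequently_map _ (fun _ hm => hm)
      (Frequently.of_forall hsq)

section NormedRing

variable {A : Type*} [NormedRing A]

theorem le_specRad_iff {r : ℝ} (hr : 0 ≤ r) {a : A} :
    r ≤ specRad a ↔ ∀ n : ℕ+, r ^ (n : ℕ) ≤ ‖a ^ (n : ℕ)‖ := by
  rw [specRad, le_ciInf_iff ⟨0, Set.forall_mem_range.2 fun _ => by positivity⟩]
  refine forall_congr' fun n => ?_
  rw [Real.le_rpow_inv_iff_of_pos hr (norm_nonneg _) (by positivity), Real.rpow_natCast]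

theorem specRad_nonneg (a : A) : 0 ≤ specRad a :=
  le_ciInf fun _ => by positivity

theorem specRad_pow_le_norm_pow (a : A) (n : ℕ+) : specRad a ^ (n : ℕ) ≤ ‖a ^ (n : ℕ)‖ :=
  (le_specRad_iff (specRad_nonneg a)).1 le_rfl n

theorem specRad_le_norm (a : A) : specRad a ≤ ‖a‖ := by
  simpa using specRad_pow_le_norm_pow a 1

theorem specRad_zero : specRad (0 : A) = 0 :=
  le_antisymm (by simpa using specRad_le_norm (0 : A)) (specRad_nonneg 0)

theorem specRad_neg (a : A) : specRad (-a) = specRad a := by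
  have h : ∀ n : ℕ, ‖(-a) ^ n‖ = ‖a ^ n‖ := fun n => by
    rcases n.even_or_odd with hn | hn <;> simp [hn.neg_pow]
  simp only [specRad, h]

theorem specRad_le_of_norm_pow_le {a : A} {M K : ℝ} (hM : 0 ≤ M)
    (h : ∀ n : ℕ, 0 < n → ‖a ^ n‖ ≤ K * M ^ n) : specRad a ≤ M :=
  le_of_frequently_pow_le_mul_pow hM <| Eventually.frequently <|
    (eventually_gt_atTop 0).mono fun n hn => (specRad_pow_le_norm_pow a ⟨n, hn⟩).trans (h n hn)

theorem isPowMul_specRad : IsPowMul (specRad : A → ℝ) := by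
  intro a m hm
  apply le_antisymm
  · set s := specRad (a ^ m) ^ ((m : ℝ)⁻¹)
    have hs : s ^ m = specRad (a ^ m) :=
      Real.rpow_inv_natCast_pow (specRad_nonneg _) (by omega)
    have hs0 : 0 ≤ s := Real.rpow_nonneg (specRad_nonneg _) _
    have hsa : s ≤ specRad a := (le_specRad_iff hs0).2 fun n => by
      rw [← pow_le_pow_iff_left₀ (pow_nonneg hs0 _) (norm_nonneg _) (by omega : m ≠ 0)]
      calc (s ^ (n : ℕ)) ^ m = specRad (a ^ m) ^ (n : ℕ) := by rw [← pow_mul, mul_comm, pow_mul, hs]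
        _ ≤ ‖(a ^ m) ^ (n : ℕ)‖ := specRad_pow_le_norm_pow _ n
        _ = ‖(a ^ (n : ℕ)) ^ m‖ := by rw [← pow_mul, ← pow_mul, mul_comm]
        _ ≤ ‖a ^ (n : ℕ)‖ ^ m := norm_pow_le' _ (by omega)
    rw [← hs]
    exact pow_le_pow_left₀ hs0 hsa m
  · refine (le_specRad_iff (pow_nonneg (specRad_nonneg a) m)).2 fun n => ?_
    rw [← pow_mul, ← pow_mul]
    exact specRad_pow_le_norm_pow a ⟨m * n, by positivity⟩

theorem specRad_mul_self (a : A) : specRad (a * a) = specRad a * specRad a := by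
  rw [← sq, isPowMul_specRad a one_le_two, sq]

theorem specRad_smul {k : Type*} [NormedField k] [NormedAlgebra k A] (c : k) (a : A) :
    specRad (c • a) = ‖c‖ * specRad a := by
  simp only [specRad, smul_pow, norm_smul, norm_pow]
  rw [Real.mul_iInf_of_nonneg (norm_nonneg c)]
  refine iInf_congr fun n => ?_
  rw [Real.mul_rpow (by positivity) (norm_nonneg _),
    Real.pow_rpow_inv_natCast (norm_nonneg _) n.ne_zero]

theorem specRad_le_one_of_powBdd {a : A} (h : PowBdd a) : specRad a ≤ 1 := by
  obtain ⟨B, hB⟩ := h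
  exact specRad_le_of_norm_pow_le (K := B) zero_le_one fun n _ => by simpa using hB n

variable {C : ℝ}

theorem specRad_eq_zero_iff (hC : ∀ a : A, ‖a‖ ≤ C * specRad a) {a : A} :
    specRad a = 0 ↔ a = 0 :=
  ⟨fun h => norm_le_zero_iff.1 (by simpa [h] using hC a), fun h => h ▸ specRad_zero⟩

theorem norm_pow_le_of_specRad_le (hC0 : 0 ≤ C) (hC : ∀ a : A, ‖a‖ ≤ C * specRad a) {a : A}
    {M : ℝ} (haM : specRad a ≤ M) (n : ℕ) : ‖a ^ n‖ ≤ C * M ^ n := by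
  rcases n.eq_zero_or_pos with rfl | hn
  · simpa using (hC 1).trans (mul_le_mul_of_nonneg_left isPowMul_specRad.map_one_le_one hC0)
  · calc ‖a ^ n‖ ≤ C * specRad (a ^ n) := hC _
      _ = C * specRad a ^ n := by rw [isPowMul_specRad a hn]
      _ ≤ C * M ^ n := mul_le_mul_of_nonneg_left
          (pow_le_pow_left₀ (specRad_nonneg a) haM n) hC0

theorem powBdd_iff_specRad_le_one (hC0 : 0 ≤ C) (hC : ∀ a : A, ‖a‖ ≤ C * specRad a) {a : A} :
    PowBdd a ↔ specRad a ≤ 1 :=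
  ⟨specRad_le_one_of_powBdd,
    fun h => ⟨C, fun n => by simpa using norm_pow_le_of_specRad_le hC0 hC h n⟩⟩

end NormedRing

section NormedCommRing

variable {A : Type*} [NormedCommRing A] {C : ℝ}

theorem specRad_mul_le (hC0 : 0 ≤ C) (hC : ∀ a : A, ‖a‖ ≤ C * specRad a) (a b : A) :
    specRad (a * b) ≤ specRad a * specRad b := by
  refine specRad_le_of_norm_pow_le (K := C * C)
    (mul_nonneg (specRad_nonneg a) (specRad_nonneg b)) fun n _ => ?_
  calc ‖(a * b) ^ n‖ ≤ ‖a ^ n‖ * ‖b ^ n‖ := by rw [mul_pow]; exact norm_mul_le _ _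
    _ ≤ (C * specRad a ^ n) * (C * specRad b ^ n) :=
        mul_le_mul (norm_pow_le_of_specRad_le hC0 hC le_rfl n)
          (norm_pow_le_of_specRad_le hC0 hC le_rfl n) (norm_nonneg _)
          (mul_nonneg hC0 (pow_nonneg (specRad_nonneg a) n))
    _ = C * C * (specRad a * specRad b) ^ n := by ring

theorem specRad_add_le [IsUltrametricDist A] (hC0 : 0 ≤ C)
    (hC : ∀ a : A, ‖a‖ ≤ C * specRad a) (a b : A) :
    specRad (a + b) ≤ max (specRad a) (specRad b) := by
  set M := max (specRad a) (specRad b)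
  have hM : 0 ≤ M := le_max_of_le_left (specRad_nonneg a)
  refine specRad_le_of_norm_pow_le (K := C * C) hM fun n _ => ?_
  rw [add_pow]
  refine IsUltrametricDist.norm_sum_le_of_forall_le_of_nonneg
    (mul_nonneg (mul_nonneg hC0 hC0) (pow_nonneg hM n)) fun i hi => ?_
  have hin : i ≤ n := Nat.lt_succ_iff.1 (Finset.mem_range.1 hi)
  calc ‖a ^ i * b ^ (n - i) * (n.choose i : A)‖ = ‖n.choose i • (a ^ i * b ^ (n - i))‖ := by
        rw [nsmul_eq_mul']
    _ ≤ ‖a ^ i‖ * ‖b ^ (n - i)‖ := (IsUltrametricDist.norm_nsmul_le _ _).trans (norm_mul_le _ _)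
    _ ≤ (C * M ^ i) * (C * M ^ (n - i)) :=
        mul_le_mul (norm_pow_le_of_specRad_le hC0 hC (le_max_left _ _) i)
          (norm_pow_le_of_specRad_le hC0 hC (le_max_right _ _) (n - i)) (norm_nonneg _)
          (mul_nonneg hC0 (pow_nonneg hM i))
    _ = C * C * M ^ n := by rw [mul_mul_mul_comm, ← pow_add, Nat.add_sub_cancel' hin]

theorem specRad_sub_le [IsUltrametricDist A] (hC0 : 0 ≤ C)
    (hC : ∀ a : A, ‖a‖ ≤ C * specRad a) (a b : A) :
    specRad (a - b) ≤ max (specRad a) (specRad b) := by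
  simpa [sub_eq_add_neg, specRad_neg] using specRad_add_le hC0 hC a (-b)

variable {k : Type*} [NormedField k] [NormedAlgebra k A]

theorem isEquivPowMulNorm_specRad [IsUltrametricDist A] (hC0 : 0 ≤ C)
    (hC : ∀ a : A, ‖a‖ ≤ C * specRad a) : IsEquivPowMulNorm k (specRad : A → ℝ) :=
  ⟨fun _ => specRad_eq_zero_iff hC, specRad_sub_le hC0 hC, specRad_smul,
    specRad_mul_le hC0 hC, specRad_mul_self,
    ⟨max C 1, lt_max_of_lt_right one_pos, fun a =>
      ⟨(specRad_le_norm a).trans (le_mul_of_one_le_left (norm_nonneg a) (le_max_right _ _)),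
        (hC a).trans (mul_le_mul_of_nonneg_right (le_max_left _ _) (specRad_nonneg a))⟩⟩⟩

theorem IsEquivPowMulNorm.eq_specRad (hC : ∀ a : A, ‖a‖ ≤ C * specRad a) {N : A → ℝ}
    (hN : IsEquivPowMulNorm k N) : N = specRad := by
  obtain ⟨-, -, -, -, hNsq, D, hD, hDN⟩ := hN
  have hN0 : ∀ a, 0 ≤ N a := fun a => nonneg_of_mul_nonneg_right
    ((norm_nonneg a).trans (hDN a).2) hD
  funext a
  refine le_antisymm (le_of_map_mul_self_of_le_mul hNsq specRad_mul_self specRad_nonneg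
    (K := D * C) (fun b => ?_) a) (le_of_map_mul_self_of_le_mul specRad_mul_self hNsq hN0
    (K := D) (fun b => (specRad_le_norm b).trans (hDN b).2) a)
  rw [mul_assoc]
  exact (hDN b).1.trans (mul_le_mul_of_nonneg_left (hC b) hD.le)

end NormedCommRing

theorem gaugeNorm_setOf_le_one {k E : Type*} [DenselyNormedField k] [AddCommGroup E]
    [Module k E] {p : E → ℝ} (hp0 : ∀ x, 0 ≤ p x) (hp : ∀ (c : k) x, p (c • x) = ‖c‖ * p x) :
    gaugeNorm k {x | p x ≤ 1} = p := by
  funext x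
  have hgt : ∀ w, p x < w → ∃ r ∈ {r : ℝ | 0 < r ∧ x ∈ kball k r • {x | p x ≤ 1}}, r < w := by
    intro w hw
    obtain ⟨c, hxc, hcw⟩ := NormedField.exists_lt_norm_lt k (hp0 x) hw
    have hc : c ≠ 0 := norm_pos_iff.1 ((hp0 x).trans_lt hxc)
    refine ⟨‖c‖, ⟨(hp0 x).trans_lt hxc, c, (le_rfl : ‖c‖ ≤ ‖c‖), c⁻¹ • x, ?_, smul_inv_smul₀ hc x⟩, hcw⟩
    change p (c⁻¹ • x) ≤ 1
    rw [hp, norm_inv, inv_mul_le_one₀ (norm_pos_iff.2 hc)]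
    exact hxc.le
  refine csInf_eq_of_forall_ge_of_forall_gt_exists_lt ?_ ?_ hgt
  · obtain ⟨r, hr, -⟩ := hgt (p x + 1) (lt_add_one _)
    exact ⟨r, hr⟩
  · rintro r ⟨-, c, hc, y, hy, rfl⟩
    rw [hp]
    exact (mul_le_of_le_one_right (norm_nonneg c) hy).trans hc

theorem gaugeNorm_powBdd_eq_specRad {k A : Type*} [DenselyNormedField k] [NormedRing A]
    [NormedAlgebra k A] {C : ℝ} (hC0 : 0 ≤ C) (hC : ∀ a : A, ‖a‖ ≤ C * specRad a) :
    gaugeNorm k {a : A | PowBdd a} = specRad := by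
  simp_rw [powBdd_iff_specRad_le_one hC0 hC]
  exact gaugeNorm_setOf_le_one specRad_nonneg specRad_smul

theorem stmt12_general {k A : Type*} [DenselyNormedField k] [NormedCommRing A] [IsUltrametricDist A]
    [NormedAlgebra k A]
    (hBFA : ∃ C > 0, ∀ a : A, ‖a‖ ≤ C * specRad a) :
    IsEquivPowMulNorm k (gaugeNorm k {a : A | PowBdd a}) ∧
    (∀ N : A → ℝ, IsEquivPowMulNorm k N → N = gaugeNorm k {a : A | PowBdd a}) ∧
    (∀ a : A, gaugeNorm k {a : A | PowBdd a} a = specRad a) := by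
  obtain ⟨C, hC0, hC⟩ := hBFA
  rw [gaugeNorm_powBdd_eq_specRad hC0.le hC]
  exact ⟨isEquivPowMulNorm_specRad hC0.le hC, fun N hN => hN.eq_specRad hC, fun _ => rfl⟩

theorem stmt12 {k A : Type*} [DenselyNormedField k] [CompleteSpace k]
    [IsUltrametricDist k] [NormedCommRing A] [NormOneClass A] [IsUltrametricDist A]
    [NormedAlgebra k A] [CompleteSpace A]
    (hBFA : ∃ C > 0, ∀ a : A, ‖a‖ ≤ C * specRad a) :
    IsEquivPowMulNorm k (gaugeNorm k {a : A | PowBdd a}) ∧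
    (∀ N : A → ℝ, IsEquivPowMulNorm k N → N = gaugeNorm k {a : A | PowBdd a}) ∧
    (∀ a : A, gaugeNorm k {a : A | PowBdd a} a = specRad a) :=
  stmt12_general hBFA
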